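/- Conjugacy of integrals: a bounded function f : F → ℝ is F^α-integrable on C(a,b) = w([a,b]) if and only if g = φ[f] is Riemann integrable over [S_F^α(a), S_F^α(b)], and in that case ∫_{C(a,b)} f(θ) d_F^α θ = ∫_{S_F^α(a)}^{S_F^α(b)} g(u) du. -/

import Mathlib

/-! The staircase function is additive along the curve: inserting a point `s` into a fine
subdivision replaces one chord by two short ones, so `γ^α(x,s) + γ^α(s,u) = γ^α(x,u)` by
uniform continuity of `w`. It has no jumps either, because the mass of `[x,u]` is at most the
(small) chord term of a short piece `[x, x + δ]` plus the mass of `[x + δ, u]`. Being strictly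
increasing, `S_F^α` is therefore a homeomorphism of `[a,b]` onto `[S_F^α(a), S_F^α(b)]`, so
subdivisions of the two intervals correspond cell by cell, with `f (C(t_i,t_{i+1}))` equal to
`g [S_F^α(t_i), S_F^α(t_{i+1})]`. Under this correspondence the upper and lower `F^α`-sums of `f`
are exactly the upper and lower Darboux sums of `g`, so the two families of sums coincide. -/

open Set
open scoped ENNReal

structure Subdivision (a b : ℝ) where
  k : ℕ
  t : ℕ → ℝ
  first : t 0 = a
  last : t k = b
  mono : ∀ i < k, t i < t (i + 1)

def Subdivision.MeshLE {a b : ℝ} (P : Subdivision a b) (δ : ℝ) : Prop :=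
  ∀ i < P.k, P.t (i + 1) - P.t i ≤ δ

noncomputable def sigmaSum {n : ℕ} (α : ℝ) (w : ℝ → EuclideanSpace ℝ (Fin n))
    {a b : ℝ} (P : Subdivision a b) : ℝ :=
  (∑ i ∈ Finset.range P.k, ‖w (P.t (i + 1)) - w (P.t i)‖ ^ α) / Real.Gamma (α + 1)

noncomputable def gammaDelta {n : ℕ} (α : ℝ) (w : ℝ → EuclideanSpace ℝ (Fin n))
    (a b δ : ℝ) : ℝ≥0∞ :=
  ⨅ (P : Subdivision a b) (_ : P.MeshLE δ), ENNReal.ofReal (sigmaSum α w P)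

noncomputable def massFn {n : ℕ} (α : ℝ) (w : ℝ → EuclideanSpace ℝ (Fin n))
    (a b : ℝ) : ℝ≥0∞ :=
  ⨆ (δ : ℝ) (_ : 0 < δ), gammaDelta α w a b δ

/-- The staircase (rise) function S_F^α(t) = γ^α(F,a₀,t). -/
noncomputable def SF {n : ℕ} (α : ℝ) (w : ℝ → EuclideanSpace ℝ (Fin n))
    (a₀ : ℝ) (t : ℝ) : ℝ :=
  (massFn α w a₀ t).toReal

/-- `l` is the F-limit of `f` as θ' → θ through points of `F`. -/
def IsFLimit {n : ℕ} (F : Set (EuclideanSpace ℝ (Fin n)))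
    (f : EuclideanSpace ℝ (Fin n) → ℝ) (θ : EuclideanSpace ℝ (Fin n)) (l : ℝ) : Prop :=
  ∀ ε > (0 : ℝ), ∃ δ > (0 : ℝ), ∀ θ' ∈ F, θ' ≠ θ → ‖θ' - θ‖ < δ → |f θ' - l| < ε

/-- `f` is F-continuous at θ. -/
def FContinuousAt {n : ℕ} (F : Set (EuclideanSpace ℝ (Fin n)))
    (f : EuclideanSpace ℝ (Fin n) → ℝ) (θ : EuclideanSpace ℝ (Fin n)) : Prop :=
  IsFLimit F f θ (f θ)

/-- The F^α-derivative of `f` at θ is `l`: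
l = F-lim_{θ'→θ} (f(θ') − f(θ))/(J(θ') − J(θ)). -/
def HasFAlphaDerivAt {n : ℕ} (F : Set (EuclideanSpace ℝ (Fin n)))
    (J : EuclideanSpace ℝ (Fin n) → ℝ) (f : EuclideanSpace ℝ (Fin n) → ℝ)
    (θ : EuclideanSpace ℝ (Fin n)) (l : ℝ) : Prop :=
  IsFLimit F (fun θ' => (f θ' - f θ) / (J θ' - J θ)) θ l

/-- Upper F^α-sum U^α[f,F,P] of `f` over the subdivision `P`. -/
noncomputable def upperFSum {n : ℕ} (α : ℝ) (w : ℝ → EuclideanSpace ℝ (Fin n))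
    (a₀ : ℝ) (f : EuclideanSpace ℝ (Fin n) → ℝ) {a b : ℝ} (P : Subdivision a b) : ℝ :=
  ∑ i ∈ Finset.range P.k,
    sSup (f '' (w '' Icc (P.t i) (P.t (i + 1)))) *
      (SF α w a₀ (P.t (i + 1)) - SF α w a₀ (P.t i))

/-- Lower F^α-sum L^α[f,F,P] of `f` over the subdivision `P`. -/
noncomputable def lowerFSum {n : ℕ} (α : ℝ) (w : ℝ → EuclideanSpace ℝ (Fin n))
    (a₀ : ℝ) (f : EuclideanSpace ℝ (Fin n) → ℝ) {a b : ℝ} (P : Subdivision a b) : ℝ :=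
  ∑ i ∈ Finset.range P.k,
    sInf (f '' (w '' Icc (P.t i) (P.t (i + 1)))) *
      (SF α w a₀ (P.t (i + 1)) - SF α w a₀ (P.t i))

/-- `f` is F^α-integrable on C(a,b) with integral `v`:
inf of upper sums = sup of lower sums = v. -/
def HasFIntegral {n : ℕ} (α : ℝ) (w : ℝ → EuclideanSpace ℝ (Fin n)) (a₀ : ℝ)
    (f : EuclideanSpace ℝ (Fin n) → ℝ) (a b : ℝ) (v : ℝ) : Prop :=
  sInf (Set.range fun P : Subdivision a b => upperFSum α w a₀ f P) = v ∧
  sSup (Set.range fun P : Subdivision a b => lowerFSum α w a₀ f P) = v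

/-- Upper Darboux sum of g : ℝ → ℝ over a subdivision of [c,d]. -/
noncomputable def upperDarboux (g : ℝ → ℝ) {c d : ℝ} (P : Subdivision c d) : ℝ :=
  ∑ i ∈ Finset.range P.k,
    sSup (g '' Icc (P.t i) (P.t (i + 1))) * (P.t (i + 1) - P.t i)

/-- Lower Darboux sum of g : ℝ → ℝ over a subdivision of [c,d]. -/
noncomputable def lowerDarboux (g : ℝ → ℝ) {c d : ℝ} (P : Subdivision c d) : ℝ :=
  ∑ i ∈ Finset.range P.k,
    sInf (g '' Icc (P.t i) (P.t (i + 1))) * (P.t (i + 1) - P.t i)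

/-- g is Riemann integrable on [c,d] with integral v: the infimum of the upper
Darboux sums and the supremum of the lower Darboux sums both equal v. -/
def HasRiemannIntegral (g : ℝ → ℝ) (c d v : ℝ) : Prop :=
  sInf (Set.range fun P : Subdivision c d => upperDarboux g P) = v ∧
  sSup (Set.range fun P : Subdivision c d => lowerDarboux g P) = v

theorem StrictMonoOn.continuousOn_Icc_of_exists {α β : Type*} [LinearOrder α]
    [TopologicalSpace α] [OrderTopology α] [LinearOrder β] [TopologicalSpace β] [OrderTopology β]
    {f : α → β} {a b : α} (hf : StrictMonoOn f (Icc a b))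
    (hright : ∀ x ∈ Ico a b, ∀ c > f x, ∃ s ∈ Ioc x b, f s ≤ c)
    (hleft : ∀ x ∈ Ioc a b, ∀ c < f x, ∃ s ∈ Ico a x, c ≤ f s) :
    ContinuousOn f (Icc a b) := by
  intro x hx
  rw [← Icc_union_Icc_eq_Icc hx.1 hx.2]
  refine ContinuousWithinAt.union ?_ ?_
  · rcases hx.1.eq_or_lt with rfl | hax
    · rw [Icc_self]
      exact continuousWithinAt_singleton
    refine ((hf.mono (Icc_subset_Icc_right hx.2)).continuousWithinAt_left_of_exists_between
      (Icc_mem_nhdsLE hax) fun c hc => ?_).mono Icc_subset_Iic_self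
    obtain ⟨s, hs, hcs⟩ := hleft x ⟨hax, hx.2⟩ c hc
    exact ⟨s, Ico_subset_Icc_self hs, hcs, hf ⟨hs.1, hs.2.le.trans hx.2⟩ hx hs.2⟩
  · rcases hx.2.eq_or_lt with rfl | hxb
    · rw [Icc_self]
      exact continuousWithinAt_singleton
    refine ((hf.mono (Icc_subset_Icc_left hx.1)).continuousWithinAt_right_of_exists_between
      (Icc_mem_nhdsGE hxb) fun c hc => ?_).mono Icc_subset_Ici_self
    obtain ⟨s, hs, hsc⟩ := hright x ⟨hx.1, hxb⟩ c hc
    exact ⟨s, Ioc_subset_Icc_self hs, hf hx ⟨hx.1.trans hs.1.le, hs.2⟩ hs.1, hsc⟩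

theorem exists_pos_forall_rpow_norm_sub_le {E : Type*} [SeminormedAddCommGroup E]
    {w : ℝ → E} {x u α ε : ℝ} (hw : ContinuousOn w (Icc x u)) (hα : 0 < α) (hε : 0 < ε) :
    ∃ δ > 0, ∀ p ∈ Icc x u, ∀ q ∈ Icc x u, |p - q| ≤ δ → ‖w p - w q‖ ^ α ≤ ε := by
  obtain ⟨δ, hδ, hw⟩ := Metric.uniformContinuousOn_iff_le.1
    (isCompact_Icc.uniformContinuousOn_of_continuous hw) (ε ^ α⁻¹) (by positivity)
  refine ⟨δ, hδ, fun p hp q hq hpq => ?_⟩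
  calc ‖w p - w q‖ ^ α ≤ (ε ^ α⁻¹) ^ α := by
        rw [← dist_eq_norm]
        exact Real.rpow_le_rpow dist_nonneg (hw p hp q hq (by rwa [Real.dist_eq])) hα.le
    _ = ε := Real.rpow_inv_rpow hε.le hα.ne'

namespace Subdivision

variable {a b : ℝ}

theorem t_strictMonoOn (P : Subdivision a b) : StrictMonoOn P.t (Iic P.k) :=
  strictMonoOn_Iic_of_lt_succ fun m hm => by simpa using P.mono m hm

theorem t_mem_Icc (P : Subdivision a b) {i : ℕ} (hi : i ≤ P.k) : P.t i ∈ Icc a b := by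
  have h := P.t_strictMonoOn.monotoneOn
  constructor
  · simpa only [P.first] using h (Nat.zero_le P.k) hi (Nat.zero_le i)
  · simpa only [P.last] using h hi (le_refl P.k) hi

theorem exists_mem_Icc_t {s : ℝ} (P : Subdivision a b) (hs : s ∈ Icc a b) (hab : a < b) :
    ∃ j < P.k, s ∈ Icc (P.t j) (P.t (j + 1)) := by
  have hk : 0 < P.k := Nat.pos_of_ne_zero fun h => by
    have := P.last
    rw [h, P.first] at this
    exact hab.ne this
  have hex : ∃ j, s ≤ P.t (j + 1) := ⟨P.k - 1, by rw [Nat.sub_add_cancel hk, P.last]; exact hs.2⟩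
  classical
  refine ⟨Nat.find hex, ?_, ?_, Nat.find_spec hex⟩
  · by_contra! h
    exact Nat.find_min hex (by omega : P.k - 1 < Nat.find hex)
      (by rw [Nat.sub_add_cancel hk, P.last]; exact hs.2)
  · rcases hj : Nat.find hex with _ | m
    · rw [P.first]
      exact hs.1
    · exact (not_le.1 (Nat.find_min hex (by omega : m < Nat.find hex))).le

def take (P : Subdivision a b) (j : ℕ) (hj : j ≤ P.k) : Subdivision a (P.t j) :=
  ⟨j, P.t, P.first, rfl, fun i hi => P.mono i (by omega)⟩

def drop (P : Subdivision a b) (j : ℕ) (hj : j ≤ P.k) : Subdivision (P.t j) b where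
  k := P.k - j
  t i := P.t (j + i)
  first := rfl
  last := by rw [Nat.add_sub_cancel' hj, P.last]
  mono i hi := P.mono (j + i) (by omega)

def concat {s : ℝ} (P : Subdivision a s) (Q : Subdivision s b) : Subdivision a b where
  k := P.k + Q.k
  t i := if i ≤ P.k then P.t i else Q.t (i - P.k)
  first := by simp [P.first]
  last := by
    rcases Nat.eq_zero_or_pos Q.k with h | h
    · simp [h, P.last, ← Q.first, ← Q.last]
    · simp [show ¬P.k + Q.k ≤ P.k by omega, Q.last]
  mono i hi := by
    rcases Nat.lt_or_ge i P.k with h | h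
    · simp only [if_pos h.le, if_pos (show i + 1 ≤ P.k from h)]
      exact P.mono i h
    · rw [if_neg (show ¬i + 1 ≤ P.k by omega), show i + 1 - P.k = i - P.k + 1 by omega]
      split_ifs with h'
      · rw [show i = P.k by omega, Nat.sub_self, P.last]
        simpa only [Q.first] using Q.mono 0 (by omega)
      · exact Q.mono _ (by omega)

theorem concat_t_left {s : ℝ} (P : Subdivision a s) (Q : Subdivision s b) {i : ℕ}
    (hi : i ≤ P.k) : (P.concat Q).t i = P.t i :=
  if_pos hi

theorem concat_t_right {s : ℝ} (P : Subdivision a s) (Q : Subdivision s b) {i : ℕ}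
    (hi : P.k ≤ i) : (P.concat Q).t i = Q.t (i - P.k) := by
  rcases hi.eq_or_lt with rfl | h
  · rw [concat_t_left _ _ le_rfl, Nat.sub_self, P.last, Q.first]
  · exact if_neg (by omega)

noncomputable def segment (hab : a ≤ b) : Subdivision a b where
  k := if a = b then 0 else 1
  t i := if i = 0 then a else b
  first := if_pos rfl
  last := by split_ifs <;> simp_all
  mono i hi := by
    split_ifs at hi with h
    · omega
    · obtain rfl : i = 0 := by omega
      simpa using lt_of_le_of_ne hab h

theorem take_meshLE {δ : ℝ} {P : Subdivision a b} (hP : P.MeshLE δ) (j : ℕ) (hj : j ≤ P.k) :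
    (P.take j hj).MeshLE δ :=
  fun i hi => hP i (by simp only [take] at hi; omega)

theorem drop_meshLE {δ : ℝ} {P : Subdivision a b} (hP : P.MeshLE δ) (j : ℕ) (hj : j ≤ P.k) :
    (P.drop j hj).MeshLE δ :=
  fun i hi => hP (j + i) (by simp only [drop] at hi; omega)

theorem concat_meshLE {s δ : ℝ} {P : Subdivision a s} {Q : Subdivision s b}
    (hP : P.MeshLE δ) (hQ : Q.MeshLE δ) : (P.concat Q).MeshLE δ := by
  intro i hi
  rcases Nat.lt_or_ge i P.k with h | h
  · rw [concat_t_left _ _ (show i + 1 ≤ P.k from h), concat_t_left _ _ h.le]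
    exact hP i h
  · rw [concat_t_right _ _ (show P.k ≤ i + 1 by omega), concat_t_right _ _ h,
      show i + 1 - P.k = i - P.k + 1 by omega]
    exact hQ _ (by simp only [concat] at hi; omega)

theorem segment_meshLE {δ : ℝ} (hab : a ≤ b) (hδ : b - a ≤ δ) : (segment hab).MeshLE δ := by
  intro i hi
  simp only [segment] at hi ⊢
  split_ifs at hi
  · omega
  · obtain rfl : i = 0 := by omega
    simpa using hδ

def IsImage (f : ℝ → ℝ) (P : Subdivision a b) (Q : Subdivision (f a) (f b)) : Prop :=
  P.k = Q.k ∧ ∀ i ≤ P.k, Q.t i = f (P.t i)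

theorem exists_isImage {f : ℝ → ℝ} (hf : StrictMonoOn f (Icc a b)) (P : Subdivision a b) :
    ∃ Q : Subdivision (f a) (f b), P.IsImage f Q :=
  ⟨⟨P.k, fun i => f (P.t i), by rw [P.first], by rw [P.last],
    fun i hi => hf (P.t_mem_Icc hi.le) (P.t_mem_Icc hi) (P.mono i hi)⟩, rfl, fun _ _ => rfl⟩

theorem exists_isImage_of_continuousOn {f : ℝ → ℝ} (hab : a ≤ b)
    (hc : ContinuousOn f (Icc a b)) (hf : StrictMonoOn f (Icc a b))
    (Q : Subdivision (f a) (f b)) : ∃ P : Subdivision a b, P.IsImage f Q := by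
  set T := Function.invFunOn f (Icc a b)
  have hT : ∀ i ≤ Q.k, T (Q.t i) ∈ Icc a b ∧ f (T (Q.t i)) = Q.t i := fun i hi => by
    have hQ := Q.t_mem_Icc hi
    rw [← hc.image_Icc_of_monotoneOn hab hf.monotoneOn] at hQ
    exact Function.invFunOn_pos hQ
  have hTf : ∀ x ∈ Icc a b, T (f x) = x := hf.injOn.leftInvOn_invFunOn
  refine ⟨⟨Q.k, fun i => T (Q.t i), ?_, ?_, fun i hi => ?_⟩, rfl, fun i hi => (hT i hi).2.symm⟩
  · rw [Q.first, hTf a ⟨le_rfl, hab⟩]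
  · rw [Q.last, hTf b ⟨hab, le_rfl⟩]
  · rw [← hf.lt_iff_lt (hT i hi.le).1 (hT (i + 1) hi).1, (hT i hi.le).2, (hT (i + 1) hi).2]
    exact Q.mono i hi

theorem range_eq_range_of_isImage {f : ℝ → ℝ} (hab : a ≤ b) (hc : ContinuousOn f (Icc a b))
    (hf : StrictMonoOn f (Icc a b)) {U : Subdivision a b → ℝ}
    {D : Subdivision (f a) (f b) → ℝ} (h : ∀ P Q, P.IsImage f Q → U P = D Q) :
    range U = range D := by
  ext v
  constructor
  · rintro ⟨P, rfl⟩
    obtain ⟨Q, hPQ⟩ := exists_isImage hf P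
    exact ⟨Q, (h P Q hPQ).symm⟩
  · rintro ⟨Q, rfl⟩
    obtain ⟨P, hPQ⟩ := exists_isImage_of_continuousOn hab hc hf Q
    exact ⟨P, h P Q hPQ⟩

end Subdivision

section Mass

variable {n : ℕ} {α : ℝ} {w : ℝ → EuclideanSpace ℝ (Fin n)}

theorem sigmaSum_nonneg (hΓ : 0 ≤ Real.Gamma (α + 1)) {a b : ℝ} (P : Subdivision a b) :
    0 ≤ sigmaSum α w P :=
  div_nonneg (Finset.sum_nonneg fun _ _ => Real.rpow_nonneg (norm_nonneg _) α) hΓ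

theorem sigmaSum_concat {a s b : ℝ} (P : Subdivision a s) (Q : Subdivision s b) :
    sigmaSum α w (P.concat Q) = sigmaSum α w P + sigmaSum α w Q := by
  rw [sigmaSum, sigmaSum, sigmaSum, ← add_div, show (P.concat Q).k = P.k + Q.k from rfl,
    Finset.sum_range_add]
  congr 2
  · refine Finset.sum_congr rfl fun i hi => ?_
    rw [Finset.mem_range] at hi
    rw [Subdivision.concat_t_left _ _ (show i + 1 ≤ P.k from hi),
      Subdivision.concat_t_left _ _ hi.le]
  · refine Finset.sum_congr rfl fun i _ => ?_
    rw [Subdivision.concat_t_right _ _ (by omega), Subdivision.concat_t_right _ _ (by omega),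
      show P.k + i + 1 - P.k = i + 1 by omega, show P.k + i - P.k = i by omega]

theorem sigmaSum_take_add_drop {a b : ℝ} (P : Subdivision a b) (j : ℕ) (hj : j ≤ P.k) :
    sigmaSum α w (P.take j hj) + sigmaSum α w (P.drop j hj) = sigmaSum α w P := by
  rw [sigmaSum, sigmaSum, sigmaSum, ← add_div]
  conv_rhs => rw [← Nat.add_sub_cancel' hj, Finset.sum_range_add]
  rfl

theorem sigmaSum_take_le_take (hΓ : 0 ≤ Real.Gamma (α + 1)) {a b : ℝ} (P : Subdivision a b)
    {i j : ℕ} (hij : i ≤ j) (hj : j ≤ P.k) :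
    sigmaSum α w (P.take i (hij.trans hj)) ≤ sigmaSum α w (P.take j hj) :=
  div_le_div_of_nonneg_right (Finset.sum_le_sum_of_subset_of_nonneg
    (Finset.range_subset_range.2 hij) fun _ _ _ => Real.rpow_nonneg (norm_nonneg _) α) hΓ

theorem sigmaSum_segment_le (hΓ : 0 ≤ Real.Gamma (α + 1)) {a b : ℝ} (hab : a ≤ b) :
    sigmaSum α w (Subdivision.segment hab) ≤ ‖w b - w a‖ ^ α / Real.Gamma (α + 1) := by
  have hpos : 0 ≤ ‖w b - w a‖ ^ α / Real.Gamma (α + 1) :=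
    div_nonneg (Real.rpow_nonneg (norm_nonneg _) α) hΓ
  unfold sigmaSum Subdivision.segment
  split_ifs <;> simp [hpos]

theorem gammaDelta_le {a b δ : ℝ} (P : Subdivision a b) (hP : P.MeshLE δ) :
    gammaDelta α w a b δ ≤ ENNReal.ofReal (sigmaSum α w P) :=
  iInf₂_le P hP

theorem gammaDelta_anti {a b δ δ' : ℝ} (h : δ ≤ δ') :
    gammaDelta α w a b δ' ≤ gammaDelta α w a b δ :=
  le_iInf₂ fun P hP => iInf₂_le P fun i hi => (hP i hi).trans h

theorem gammaDelta_le_massFn {a b δ : ℝ} (hδ : 0 < δ) :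
    gammaDelta α w a b δ ≤ massFn α w a b :=
  le_iSup₂ (f := fun (δ : ℝ) (_ : 0 < δ) => gammaDelta α w a b δ) δ hδ

theorem gammaDelta_le_rpow_norm_sub (hΓ : 0 ≤ Real.Gamma (α + 1)) {a b δ : ℝ} (hab : a ≤ b)
    (hδ : b - a ≤ δ) :
    gammaDelta α w a b δ ≤ ENNReal.ofReal (‖w b - w a‖ ^ α / Real.Gamma (α + 1)) :=
  (gammaDelta_le _ (Subdivision.segment_meshLE hab hδ)).trans
    (ENNReal.ofReal_le_ofReal (sigmaSum_segment_le hΓ hab))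

theorem gammaDelta_le_add (hΓ : 0 ≤ Real.Gamma (α + 1)) {a s b δ : ℝ} :
    gammaDelta α w a b δ ≤ gammaDelta α w a s δ + gammaDelta α w s b δ := by
  simp only [gammaDelta, ENNReal.iInf_add, ENNReal.add_iInf]
  refine le_iInf₂ fun Q hQ => le_iInf₂ fun P hP => ?_
  rw [← ENNReal.ofReal_add (sigmaSum_nonneg hΓ P) (sigmaSum_nonneg hΓ Q), ← sigmaSum_concat]
  exact gammaDelta_le _ (Subdivision.concat_meshLE hP hQ)

theorem gammaDelta_add_gammaDelta_le (hΓ : 0 ≤ Real.Gamma (α + 1)) {a s b δ η : ℝ}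
    (hs : s ∈ Icc a b) (hab : a < b)
    (hmod : ∀ p ∈ Icc a b, ∀ q ∈ Icc a b, |p - q| ≤ δ → ‖w p - w q‖ ^ α ≤ η) :
    gammaDelta α w a s δ + gammaDelta α w s b δ ≤
      gammaDelta α w a b δ + ENNReal.ofReal (2 * η / Real.Gamma (α + 1)) := by
  simp only [gammaDelta.eq_1 α w a b, ENNReal.iInf_add]
  refine le_iInf₂ fun P hP => ?_
  obtain ⟨j, hj, hsj⟩ := P.exists_mem_Icc_t hs hab
  have hcell : P.t (j + 1) - P.t j ≤ δ := hP j hj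
  have hseg {p q : ℝ} (hpq : p ≤ q) (hp : p ∈ Icc (P.t j) (P.t (j + 1)))
      (hq : q ∈ Icc (P.t j) (P.t (j + 1))) :
      sigmaSum α w (Subdivision.segment hpq) ≤ η / Real.Gamma (α + 1) := by
    refine (sigmaSum_segment_le hΓ hpq).trans (div_le_div_of_nonneg_right ?_ hΓ)
    have hsub : Icc (P.t j) (P.t (j + 1)) ⊆ Icc a b :=
      Icc_subset_Icc (P.t_mem_Icc hj.le).1 (P.t_mem_Icc hj).2
    exact hmod q (hsub hq) p (hsub hp) (by rw [abs_of_nonneg (by linarith)]; linarith [hp.1, hq.2])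
  have hj' : P.t j ∈ Icc (P.t j) (P.t (j + 1)) := ⟨le_rfl, (P.mono j hj).le⟩
  have hj1 : P.t (j + 1) ∈ Icc (P.t j) (P.t (j + 1)) := ⟨(P.mono j hj).le, le_rfl⟩
  -- Cutting the cell `[P.t j, P.t (j + 1)]` at `s` replaces one chord by two short ones.
  set P₁ := (P.take j hj.le).concat (Subdivision.segment hsj.1)
  set P₂ := (Subdivision.segment hsj.2).concat (P.drop (j + 1) hj)
  have hsum : sigmaSum α w P₁ + sigmaSum α w P₂ ≤
      sigmaSum α w P + 2 * η / Real.Gamma (α + 1) := by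
    rw [sigmaSum_concat, sigmaSum_concat, ← sigmaSum_take_add_drop P (j + 1) hj]
    have := sigmaSum_take_le_take (w := w) hΓ P (Nat.le_add_right j 1) hj
    have htwo : 2 * η / Real.Gamma (α + 1) = η / Real.Gamma (α + 1) + η / Real.Gamma (α + 1) := by
      ring
    linarith [hseg hsj.1 hj' hsj, hseg hsj.2 hsj hj1]
  calc gammaDelta α w a s δ + gammaDelta α w s b δ
      ≤ ENNReal.ofReal (sigmaSum α w P₁) + ENNReal.ofReal (sigmaSum α w P₂) :=
        add_le_add
          (gammaDelta_le _ (Subdivision.concat_meshLE (Subdivision.take_meshLE hP _ _)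
            (Subdivision.segment_meshLE _ (by linarith [hsj.2]))))
          (gammaDelta_le _ (Subdivision.concat_meshLE
            (Subdivision.segment_meshLE _ (by linarith [hsj.1]))
            (Subdivision.drop_meshLE hP _ _)))
    _ = ENNReal.ofReal (sigmaSum α w P₁ + sigmaSum α w P₂) :=
        (ENNReal.ofReal_add (sigmaSum_nonneg hΓ _) (sigmaSum_nonneg hΓ _)).symm
    _ ≤ ENNReal.ofReal (sigmaSum α w P) + ENNReal.ofReal (2 * η / Real.Gamma (α + 1)) :=
        (ENNReal.ofReal_le_ofReal hsum).trans ENNReal.ofReal_add_le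

theorem massFn_self (a : ℝ) : massFn α w a a = 0 := by
  refine le_antisymm (iSup₂_le fun δ _ => ?_) zero_le
  refine (gammaDelta_le (Subdivision.segment le_rfl) fun i hi => ?_).trans_eq ?_
  · simp [Subdivision.segment] at hi
  · simp [sigmaSum, Subdivision.segment]

theorem massFn_le_add (hΓ : 0 ≤ Real.Gamma (α + 1)) {a s b : ℝ} :
    massFn α w a b ≤ massFn α w a s + massFn α w s b :=
  iSup₂_le fun _ hδ =>
    (gammaDelta_le_add hΓ).trans (add_le_add (gammaDelta_le_massFn hδ) (gammaDelta_le_massFn hδ))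

theorem massFn_add_massFn_le {a s b : ℝ} (hw : ContinuousOn w (Icc a b)) (hα : 0 < α)
    (hs : s ∈ Icc a b) : massFn α w a s + massFn α w s b ≤ massFn α w a b := by
  rcases (hs.1.trans hs.2).eq_or_lt with rfl | hab
  · obtain rfl : s = a := le_antisymm hs.2 hs.1
    simp [massFn_self]
  have hΓ : 0 < Real.Gamma (α + 1) := Real.Gamma_pos_of_pos (by linarith)
  refine ENNReal.le_of_forall_pos_le_add fun ε hε _ => ?_
  obtain ⟨δ₀, hδ₀, hmod⟩ := exists_pos_forall_rpow_norm_sub_le hw hα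
    (show 0 < (ε : ℝ) * Real.Gamma (α + 1) / 2 by positivity)
  refine ENNReal.biSup_add_biSup_le' ⟨1, one_pos⟩ ⟨1, one_pos⟩ fun δ₁ hδ₁ δ₂ hδ₂ => ?_
  set δ := min (min δ₁ δ₂) δ₀
  have hδ : 0 < δ := lt_min (lt_min hδ₁ hδ₂) hδ₀
  have hε' : ENNReal.ofReal (2 * ((ε : ℝ) * Real.Gamma (α + 1) / 2) / Real.Gamma (α + 1)) = ε := by
    rw [mul_div_cancel₀ _ two_ne_zero, mul_div_cancel_right₀ _ hΓ.ne', ENNReal.ofReal_coe_nnreal]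
  calc gammaDelta α w a s δ₁ + gammaDelta α w s b δ₂
      ≤ gammaDelta α w a s δ + gammaDelta α w s b δ :=
        add_le_add (gammaDelta_anti ((min_le_left _ _).trans (min_le_left _ _)))
          (gammaDelta_anti ((min_le_left _ _).trans (min_le_right _ _)))
    _ ≤ gammaDelta α w a b δ + ε := hε' ▸ gammaDelta_add_gammaDelta_le hΓ.le hs hab
          fun p hp q hq hpq => hmod p hp q hq (hpq.trans (min_le_right _ _))
    _ ≤ massFn α w a b + ε := add_le_add_left (gammaDelta_le_massFn hδ) _

theorem massFn_add {a s b : ℝ} (hw : ContinuousOn w (Icc a b)) (hα : 0 < α)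
    (hs : s ∈ Icc a b) : massFn α w a s + massFn α w s b = massFn α w a b :=
  le_antisymm (massFn_add_massFn_le hw hα hs)
    (massFn_le_add (Real.Gamma_pos_of_pos (by linarith)).le)

theorem massFn_le_iSup_Ioc {a b : ℝ} (hw : ContinuousOn w (Icc a b)) (hα : 0 < α) (hab : a < b) :
    massFn α w a b ≤ ⨆ s ∈ Ioc a b, massFn α w s b := by
  have hΓ : 0 < Real.Gamma (α + 1) := Real.Gamma_pos_of_pos (by linarith)
  refine ENNReal.le_of_forall_pos_le_add fun ε hε _ => iSup₂_le fun δ hδ => ?_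
  obtain ⟨δ₀, hδ₀, hmod⟩ := exists_pos_forall_rpow_norm_sub_le hw hα
    (show 0 < (ε : ℝ) * Real.Gamma (α + 1) by positivity)
  set s := a + min (min δ δ₀) (b - a)
  have hsa : 0 < s - a := by simp only [s, add_sub_cancel_left]; positivity
  have hsδ : s - a ≤ min δ δ₀ := by simp only [s, add_sub_cancel_left]; exact min_le_left _ _
  have hs : s ∈ Ioc a b := ⟨by linarith, by simp only [s]; linarith [min_le_right (min δ δ₀) (b - a)]⟩
  have hsmall : ENNReal.ofReal (‖w s - w a‖ ^ α / Real.Gamma (α + 1)) ≤ ε := by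
    rw [← ENNReal.ofReal_coe_nnreal]
    refine ENNReal.ofReal_le_ofReal ((div_le_iff₀ hΓ).2 (hmod s ⟨hs.1.le, hs.2⟩ a ⟨le_rfl, hab.le⟩ ?_))
    rw [abs_of_pos hsa]
    exact hsδ.trans (min_le_right _ _)
  calc gammaDelta α w a b δ
      ≤ gammaDelta α w a b (s - a) := gammaDelta_anti (hsδ.trans (min_le_left _ _))
    _ ≤ gammaDelta α w a s (s - a) + gammaDelta α w s b (s - a) := gammaDelta_le_add hΓ.le
    _ ≤ ε + ⨆ s ∈ Ioc a b, massFn α w s b :=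
        add_le_add ((gammaDelta_le_rpow_norm_sub hΓ.le hs.1.le le_rfl).trans hsmall)
          ((gammaDelta_le_massFn hsa).trans (le_iSup₂_of_le s hs le_rfl))
    _ = _ := add_comm _ _

theorem massFn_le_iSup_Ico {a b : ℝ} (hw : ContinuousOn w (Icc a b)) (hα : 0 < α) (hab : a < b) :
    massFn α w a b ≤ ⨆ s ∈ Ico a b, massFn α w a s := by
  have hΓ : 0 < Real.Gamma (α + 1) := Real.Gamma_pos_of_pos (by linarith)
  refine ENNReal.le_of_forall_pos_le_add fun ε hε _ => iSup₂_le fun δ hδ => ?_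
  obtain ⟨δ₀, hδ₀, hmod⟩ := exists_pos_forall_rpow_norm_sub_le hw hα
    (show 0 < (ε : ℝ) * Real.Gamma (α + 1) by positivity)
  set s := b - min (min δ δ₀) (b - a)
  have hbs : 0 < b - s := by simp only [s, sub_sub_cancel]; positivity
  have hsδ : b - s ≤ min δ δ₀ := by simp only [s, sub_sub_cancel]; exact min_le_left _ _
  have hs : s ∈ Ico a b := ⟨by simp only [s]; linarith [min_le_right (min δ δ₀) (b - a)], by linarith⟩
  have hsmall : ENNReal.ofReal (‖w b - w s‖ ^ α / Real.Gamma (α + 1)) ≤ ε := by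
    rw [← ENNReal.ofReal_coe_nnreal]
    refine ENNReal.ofReal_le_ofReal ((div_le_iff₀ hΓ).2 (hmod b ⟨hab.le, le_rfl⟩ s ⟨hs.1, hs.2.le⟩ ?_))
    rw [abs_of_pos hbs]
    exact hsδ.trans (min_le_right _ _)
  calc gammaDelta α w a b δ
      ≤ gammaDelta α w a b (b - s) := gammaDelta_anti (hsδ.trans (min_le_left _ _))
    _ ≤ gammaDelta α w a s (b - s) + gammaDelta α w s b (b - s) := gammaDelta_le_add hΓ.le
    _ ≤ (⨆ s ∈ Ico a b, massFn α w a s) + ε :=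
        add_le_add ((gammaDelta_le_massFn hbs).trans (le_iSup₂_of_le s hs le_rfl))
          ((gammaDelta_le_rpow_norm_sub hΓ.le hs.2.le le_rfl).trans hsmall)

end Mass

section Staircase

variable {n : ℕ} {α : ℝ} {w : ℝ → EuclideanSpace ℝ (Fin n)} {a₀ b₀ : ℝ}

theorem massFn_eq_ofReal_SF_sub (hw : ContinuousOn w (Icc a₀ b₀)) (hα : 0 < α)
    (hfin : ∀ t ∈ Icc a₀ b₀, massFn α w a₀ t ≠ ⊤) {x y : ℝ} (hx : a₀ ≤ x) (hxy : x ≤ y)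
    (hy : y ≤ b₀) : massFn α w x y = ENNReal.ofReal (SF α w a₀ y - SF α w a₀ x) := by
  have hadd := massFn_add (hw.mono (Icc_subset_Icc_right hy)) hα ⟨hx, hxy⟩
  have hfy := hfin y ⟨hx.trans hxy, hy⟩
  rw [← hadd] at hfy
  rw [SF, SF, ← hadd, ENNReal.toReal_add (ENNReal.add_ne_top.1 hfy).1
    (ENNReal.add_ne_top.1 hfy).2, add_sub_cancel_left, ENNReal.ofReal_toReal
    (ENNReal.add_ne_top.1 hfy).2]

theorem SF_continuousOn (hw : ContinuousOn w (Icc a₀ b₀)) (hα : 0 < α)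
    (hfin : ∀ t ∈ Icc a₀ b₀, massFn α w a₀ t ≠ ⊤) (hS : StrictMonoOn (SF α w a₀) (Icc a₀ b₀)) :
    ContinuousOn (SF α w a₀) (Icc a₀ b₀) := by
  refine hS.continuousOn_Icc_of_exists (fun x hx c hc => ?_) (fun x hx c hc => ?_)
  · by_contra! h
    have hbound : massFn α w x b₀ ≤ ENNReal.ofReal (SF α w a₀ b₀ - c) := by
      refine (massFn_le_iSup_Ioc (hw.mono (Icc_subset_Icc_left hx.1)) hα hx.2).trans
        (iSup₂_le fun s hs => ?_)
      rw [massFn_eq_ofReal_SF_sub hw hα hfin (hx.1.trans hs.1.le) hs.2 le_rfl]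
      exact ENNReal.ofReal_le_ofReal (by linarith [h s hs])
    rw [massFn_eq_ofReal_SF_sub hw hα hfin hx.1 hx.2.le le_rfl,
      ENNReal.ofReal_le_ofReal_iff'] at hbound
    have := hS ⟨hx.1, hx.2.le⟩ ⟨hx.1.trans hx.2.le, le_rfl⟩ hx.2
    rcases hbound with h | h <;> linarith
  · by_contra! h
    have hbound : massFn α w a₀ x ≤ ENNReal.ofReal c := by
      refine (massFn_le_iSup_Ico (hw.mono (Icc_subset_Icc_right hx.2)) hα hx.1).trans
        (iSup₂_le fun s hs => ?_)
      rw [← ENNReal.ofReal_toReal (hfin s ⟨hs.1, hs.2.le.trans hx.2⟩)]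
      exact ENNReal.ofReal_le_ofReal (h s hs).le
    rw [← ENNReal.ofReal_toReal (hfin x ⟨hx.1.le, hx.2⟩), ENNReal.ofReal_le_ofReal_iff'] at hbound
    change SF α w a₀ x ≤ c ∨ SF α w a₀ x ≤ 0 at hbound
    have hSF₀ : SF α w a₀ a₀ = 0 := by simp [SF, massFn_self]
    have := hS ⟨le_rfl, hx.1.le.trans hx.2⟩ ⟨hx.1.le, hx.2⟩ hx.1
    rcases hbound with h | h <;> linarith

end Staircase

theorem image_Icc_eq_image_image {X Y : Type*} {φ : ℝ → ℝ} {w : ℝ → X} {f : X → Y} {g : ℝ → Y}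
    {a b s s' : ℝ} (hc : ContinuousOn φ (Icc a b)) (hφ : MonotoneOn φ (Icc a b))
    (hg : ∀ t ∈ Icc a b, g (φ t) = f (w t)) (hs : s ∈ Icc a b) (hs' : s' ∈ Icc a b)
    (hss' : s ≤ s') : g '' Icc (φ s) (φ s') = f '' (w '' Icc s s') := by
  have hsub : Icc s s' ⊆ Icc a b := Icc_subset_Icc hs.1 hs'.2
  rw [← (hc.mono hsub).image_Icc_of_monotoneOn hss' (hφ.mono hsub), image_image, image_image]
  exact image_congr fun t ht => hg t (hsub ht)

section Conjugacy

variable {n : ℕ} {α : ℝ} {w : ℝ → EuclideanSpace ℝ (Fin n)} {a₀ a b : ℝ}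
  {f : EuclideanSpace ℝ (Fin n) → ℝ} {g : ℝ → ℝ}

theorem upperFSum_eq_upperDarboux (hc : ContinuousOn (SF α w a₀) (Icc a b))
    (hS : MonotoneOn (SF α w a₀) (Icc a b)) (hg : ∀ t ∈ Icc a b, g (SF α w a₀ t) = f (w t))
    {P : Subdivision a b} {Q : Subdivision (SF α w a₀ a) (SF α w a₀ b)}
    (hPQ : P.IsImage (SF α w a₀) Q) : upperFSum α w a₀ f P = upperDarboux g Q := by
  rw [upperFSum, upperDarboux, ← hPQ.1]
  refine Finset.sum_congr rfl fun i hi => ?_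
  rw [Finset.mem_range] at hi
  rw [hPQ.2 i hi.le, hPQ.2 (i + 1) hi, image_Icc_eq_image_image hc hS hg (P.t_mem_Icc hi.le)
    (P.t_mem_Icc hi) (P.mono i hi).le]

theorem lowerFSum_eq_lowerDarboux (hc : ContinuousOn (SF α w a₀) (Icc a b))
    (hS : MonotoneOn (SF α w a₀) (Icc a b)) (hg : ∀ t ∈ Icc a b, g (SF α w a₀ t) = f (w t))
    {P : Subdivision a b} {Q : Subdivision (SF α w a₀ a) (SF α w a₀ b)}
    (hPQ : P.IsImage (SF α w a₀) Q) : lowerFSum α w a₀ f P = lowerDarboux g Q := by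
  rw [lowerFSum, lowerDarboux, ← hPQ.1]
  refine Finset.sum_congr rfl fun i hi => ?_
  rw [Finset.mem_range] at hi
  rw [hPQ.2 i hi.le, hPQ.2 (i + 1) hi, image_Icc_eq_image_image hc hS hg (P.t_mem_Icc hi.le)
    (P.t_mem_Icc hi) (P.mono i hi).le]

end Conjugacy

theorem conjugacy_of_integrals_general {n : ℕ} {a₀ b₀ : ℝ}
    (w : ℝ → EuclideanSpace ℝ (Fin n))
    (hw : ContinuousOn w (Icc a₀ b₀))
    {α : ℝ} (hα : α ∈ Icc (1 : ℝ) (n : ℝ))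
    (hfin : ∀ t ∈ Icc a₀ b₀, massFn α w a₀ t ≠ ⊤)
    (hS : StrictMonoOn (SF α w a₀) (Icc a₀ b₀))
    {a b : ℝ} (ha : a₀ ≤ a) (hab : a ≤ b) (hb : b ≤ b₀)
    (f : EuclideanSpace ℝ (Fin n) → ℝ)
    (g : ℝ → ℝ) (hg : ∀ t ∈ Icc a₀ b₀, g (SF α w a₀ t) = f (w t)) :
    ∀ v : ℝ, HasFIntegral α w a₀ f a b v ↔
      HasRiemannIntegral g (SF α w a₀ a) (SF α w a₀ b) v := by
  intro v
  have hsub : Icc a b ⊆ Icc a₀ b₀ := Icc_subset_Icc ha hb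
  have hc := (SF_continuousOn hw (by linarith [hα.1]) hfin hS).mono hsub
  have hmono := hS.mono hsub
  have hg' : ∀ t ∈ Icc a b, g (SF α w a₀ t) = f (w t) := fun t ht => hg t (hsub ht)
  rw [HasFIntegral, HasRiemannIntegral,
    Subdivision.range_eq_range_of_isImage hab hc hmono fun _ _ =>
      upperFSum_eq_upperDarboux hc hmono.monotoneOn hg',
    Subdivision.range_eq_range_of_isImage hab hc hmono fun _ _ =>
      lowerFSum_eq_lowerDarboux hc hmono.monotoneOn hg']

/-- conjugacy of integrals: a bounded f : F → ℝ is
F^α-integrable on C(a,b) iff g = φ[f] is Riemann integrable on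
[S_F^α(a), S_F^α(b)], with equal values:
∫_{C(a,b)} f dθ = ∫_{S_F^α(a)}^{S_F^α(b)} g(u) du. -/
theorem conjugacy_of_integrals {n : ℕ} (hn : 1 ≤ n) {a₀ b₀ : ℝ}
    (w : ℝ → EuclideanSpace ℝ (Fin n))
    (hw : ContinuousOn w (Icc a₀ b₀)) (hinj : InjOn w (Icc a₀ b₀))
    {α : ℝ} (hα : α ∈ Icc (1 : ℝ) (n : ℝ))
    (hfin : ∀ t ∈ Icc a₀ b₀, massFn α w a₀ t ≠ ⊤)
    (hS : StrictMonoOn (SF α w a₀) (Icc a₀ b₀))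
    {a b : ℝ} (ha : a₀ ≤ a) (hab : a ≤ b) (hb : b ≤ b₀)
    (f : EuclideanSpace ℝ (Fin n) → ℝ)
    (hbdd : ∃ M, ∀ θ ∈ w '' Icc a₀ b₀, |f θ| ≤ M)
    (g : ℝ → ℝ) (hg : ∀ t ∈ Icc a₀ b₀, g (SF α w a₀ t) = f (w t)) :
    ∀ v : ℝ, HasFIntegral α w a₀ f a b v ↔
      HasRiemannIntegral g (SF α w a₀ a) (SF α w a₀ b) v :=
  conjugacy_of_integrals_general w hw hα hfin hS ha hab hb f g hg
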